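/- For a graded poset P of rank at least 2, H'(\Psi(P)) = \sum_{x \text{ coatom of } P} \Psi([\hat{0}, x]), where H' is the linear operator on Z\langle a,b\rangle deleting the last letter of each monomial (with H'(1)=0). -/

import Mathlib

open Finset

/-- The ring `ℤ⟨a,b⟩` of noncommutative polynomials in the variables `a` and `b`,
realized as the monoid algebra of the free monoid on two letters
(`false` encodes the letter `a` and `true` the letter `b`). -/
abbrev AB : Type := MonoidAlgebra ℤ (FreeMonoid Bool)

/-- The variable `a`. -/
noncomputable def aV : AB := MonoidAlgebra.single (FreeMonoid.ofList [false]) 1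

/-- The variable `b`. -/
noncomputable def bV : AB := MonoidAlgebra.single (FreeMonoid.ofList [true]) 1

/-- The `ab`-monomial `u_S` of degree `n`, with `b` in the positions of `S`. -/
def word (n : ℕ) (S : Finset ℕ) : FreeMonoid Bool :=
  FreeMonoid.ofList (List.ofFn fun i : Fin n => decide ((i : ℕ) + 1 ∈ S))

/-- The flag `f`-vector entry `f_S`. -/
noncomputable def flagF (P : Type*) [PartialOrder P] (ρ : P → ℕ) (S : Finset ℕ) : ℤ :=
  ({c : Finset P | IsChain (· ≤ ·) (↑c : Set P) ∧ c.image ρ = S} : Set (Finset P)).ncard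

/-- The flag `h`-vector entry `h_S`. -/
noncomputable def flagH (P : Type*) [PartialOrder P] (ρ : P → ℕ) (S : Finset ℕ) : ℤ :=
  ∑ T ∈ S.powerset, (-1) ^ (S.card - T.card) * flagF P ρ T

/-- The `ab`-index `Ψ(P) = ∑_S h_S u_S` of a poset `P` of rank `n+1` with rank
function `ρ` (the elements of ranks `1,…,n` are the proper part of `P`). -/
noncomputable def Psi (P : Type*) [PartialOrder P] (ρ : P → ℕ) (n : ℕ) : AB :=
  ∑ S ∈ (Finset.Icc 1 n).powerset, MonoidAlgebra.single (word n S) (flagH P ρ S)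


open scoped Classical

/-- Extend a function on `ab`-monomials linearly to all of `ℤ⟨a,b⟩`. -/
noncomputable def extendMon (g : List Bool → AB) : AB → AB := fun w =>
  w.coeff.sum fun m c => c • g (FreeMonoid.toList m)

/-- The Möbius function of a finite poset. -/
noncomputable def muP (P : Type*) [PartialOrder P] [Fintype P] (x y : P) : ℤ :=
  letI := Classical.decEq P
  letI : DecidableRel (α := P) (· < ·) := Classical.decRel _
  letI : DecidableRel (α := P) (· ≤ ·) := Classical.decRel _
  letI := Fintype.toLocallyFiniteOrder (α := P)
  IncidenceAlgebra.mu ℤ x y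

/-- The operator `H'` deleting the last letter of each `ab`-monomial. -/
noncomputable def HMon (l : List Bool) : AB :=
  if l = [] then 0 else MonoidAlgebra.single (FreeMonoid.ofList l.dropLast) 1

/-!
Deleting the last letter sends the degree-`n` monomial `u_S` to `u_{S \ {n}}`, so the
coefficient of `u_T` in `H'(Ψ(P))` is `h_T + h_{T ∪ {n}}`, which by inclusion–exclusion is the
alternating sum of the `f_{U ∪ {n}}` over `U ⊆ T`. A chain with rank set `U ∪ {n}` contains
exactly one coatom `x`, and deleting `x` leaves a chain of `[0̂, x]` with rank set `U`; hence
`f_{U ∪ {n}}(P) = ∑ₓ f_U([0̂, x])`, and resumming gives `h_T + h_{T ∪ {n}} = ∑ₓ h_T([0̂, x])`.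
-/

theorem extendMon_single (g : List Bool → AB) (m : FreeMonoid Bool) (c : ℤ) :
    extendMon g (MonoidAlgebra.single m c) = c • g (FreeMonoid.toList m) :=
  Finsupp.sum_single_index (zero_smul ℤ _)

theorem extendMon_sum {ι : Type*} (g : List Bool → AB) (s : Finset ι) (f : ι → AB) :
    extendMon g (∑ i ∈ s, f i) = ∑ i ∈ s, extendMon g (f i) := by
  rw [extendMon, MonoidAlgebra.coeff_sum]
  exact (Finsupp.sum_finsetSum_index (h := fun m c => c • g (FreeMonoid.toList m))
    (fun _ => zero_smul ℤ _) (fun _ _ _ => add_smul ..)).symm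

theorem word_insert_of_lt {m k : ℕ} (S : Finset ℕ) (hk : m < k) :
    word m (insert k S) = word m S := by
  unfold word
  congr 2
  funext i
  have : (i : ℕ) + 1 ≠ k := by omega
  simp [this]

theorem HMon_word_succ (m : ℕ) (S : Finset ℕ) :
    HMon (FreeMonoid.toList (word (m + 1) S)) = MonoidAlgebra.single (word m S) 1 := by
  rw [word, FreeMonoid.toList_ofList, HMon, if_neg (by simp), List.ofFn_succ',
    List.concat_eq_append, List.dropLast_concat]
  rfl

theorem extendMon_HMon_Psi_succ (P : Type*) [PartialOrder P] (ρ : P → ℕ) (m : ℕ) :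
    extendMon HMon (Psi P ρ (m + 1)) =
      ∑ T ∈ (Icc 1 m).powerset,
        MonoidAlgebra.single (word m T) (flagH P ρ T + flagH P ρ (insert (m + 1) T)) := by
  have hIcc : Icc 1 (m + 1) = insert (m + 1) (Icc 1 m) := by
    ext j
    simp only [mem_Icc, mem_insert]
    omega
  rw [Psi, extendMon_sum, hIcc, sum_powerset_insert (by simp), ← sum_add_distrib]
  refine sum_congr rfl fun T _ => ?_
  rw [extendMon_single, extendMon_single, HMon_word_succ, HMon_word_succ,
    word_insert_of_lt T (Nat.lt_succ_self m), MonoidAlgebra.single_add]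
  simp

theorem flagF_eq_card (P : Type*) [PartialOrder P] [Fintype P] (ρ : P → ℕ) (S : Finset ℕ) :
    flagF P ρ S = #{c : Finset P | IsChain (· ≤ ·) (c : Set P) ∧ c.image ρ = S} := by
  rw [flagF, ← Set.ncard_coe_finset]
  congr
  ext
  simp

theorem flagH_add_flagH_insert (P : Type*) [PartialOrder P] (ρ : P → ℕ) {T : Finset ℕ} {k : ℕ}
    (hk : k ∉ T) :
    flagH P ρ T + flagH P ρ (insert k T) =
      ∑ U ∈ T.powerset, (-1) ^ (#T - #U) * flagF P ρ (insert k U) := by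
  have hcancel : ∀ U ∈ T.powerset,
      (-1) ^ (#T - #U) * flagF P ρ U + (-1) ^ (#T + 1 - #U) * flagF P ρ U = 0 := by
    intro U hU
    rw [show #T + 1 - #U = #T - #U + 1 by have := card_le_card (mem_powerset.1 hU); omega,
      pow_succ]
    ring
  have hshift : ∀ U ∈ T.powerset, (-1) ^ (#T + 1 - #(insert k U)) * flagF P ρ (insert k U) =
      (-1) ^ (#T - #U) * flagF P ρ (insert k U) := by
    intro U hU
    rw [card_insert_of_notMem fun h => hk (mem_powerset.1 hU h), Nat.add_sub_add_right]
  rw [flagH, flagH, sum_powerset_insert hk, card_insert_of_notMem hk, ← add_assoc,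
    ← sum_add_distrib, sum_eq_zero hcancel, zero_add]
  exact sum_congr rfl hshift

section Chains

variable {P : Type*} [PartialOrder P] {ρ : P → ℕ}

theorem IsChain.le_of_rank_le (hρ : StrictMono ρ) {s : Set P} (hs : IsChain (· ≤ ·) s)
    {x y : P} (hx : x ∈ s) (hy : y ∈ s) (h : ρ y ≤ ρ x) : y ≤ x := by
  rcases hs.total hy hx with hyx | hxy
  · exact hyx
  · rcases hxy.eq_or_lt with rfl | hlt
    · exact le_rfl
    · exact absurd (hρ hlt) h.not_gt

theorem IsChain.eq_of_rank_eq (hρ : StrictMono ρ) {s : Set P} (hs : IsChain (· ≤ ·) s)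
    {x y : P} (hx : x ∈ s) (hy : y ∈ s) (h : ρ x = ρ y) : x = y :=
  le_antisymm (hs.le_of_rank_le hρ hy hx h.le) (hs.le_of_rank_le hρ hx hy h.ge)

theorem covBy_top_iff_rank_eq [OrderTop P] (hρ : StrictMono ρ)
    (hcov : ∀ x y : P, x ⋖ y → ρ y = ρ x + 1) {n : ℕ} (htop : ρ ⊤ = n + 1) (x : P) :
    x ⋖ ⊤ ↔ ρ x = n := by
  refine ⟨fun h => by have := hcov x ⊤ h; omega, fun hx => ⟨?_, fun z hxz hzt => ?_⟩⟩
  · exact lt_top_iff_ne_top.2 fun h => by rw [h] at hx; omega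
  · have := hρ hxz
    have := hρ hzt
    omega

variable [Fintype P]

theorem flagF_subtype (p : P → Prop) (S : Finset ℕ) :
    flagF {y // p y} (fun y => ρ y.1) S =
      #{d : Finset P | IsChain (· ≤ ·) (d : Set P) ∧ (∀ y ∈ d, p y) ∧ d.image ρ = S} := by
  rw [flagF_eq_card, Nat.cast_inj]
  refine card_nbij' (fun c => c.map (Function.Embedding.subtype p)) (fun d => d.subtype p)
    ?_ ?_ ?_ ?_
  · simp only [Set.MapsTo, coe_filter, mem_univ, true_and, Set.mem_ofPred_eq]
    rintro c ⟨hc, himg⟩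
    refine ⟨?_, fun y hy => property_of_mem_map_subtype c hy, ?_⟩
    · rw [coe_map]
      exact hc.image (OrderEmbedding.subtype p)
    · rw [← himg, map_eq_image, image_image]
      rfl
  · simp only [Set.MapsTo, coe_filter, mem_univ, true_and, Set.mem_ofPred_eq]
    rintro d ⟨hd, hp, himg⟩
    refine ⟨(hd.preimage_relEmbedding (OrderEmbedding.subtype p)).mono fun y => by simp, ?_⟩
    rw [← himg]
    conv_rhs => rw [← subtype_map_of_mem hp, map_eq_image, image_image]
    rfl
  · intro c _
    ext y
    simp [y.2]
  · simp only [Set.LeftInvOn, coe_filter, mem_univ, true_and, Set.mem_ofPred_eq]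
    rintro d ⟨-, hp, -⟩
    exact subtype_map_of_mem hp

theorem card_chains_through_eq_card_chains_below (hρ : StrictMono ρ) (x : P) {U : Finset ℕ}
    (hU : ∀ j ∈ U, j < ρ x) :
    #{c : Finset P | IsChain (· ≤ ·) (c : Set P) ∧ x ∈ c ∧ c.image ρ = insert (ρ x) U} =
      #{d : Finset P | IsChain (· ≤ ·) (d : Set P) ∧ (∀ y ∈ d, y ≤ x) ∧ d.image ρ = U} := by
  have hxU : ρ x ∉ U := fun h => (hU _ h).false
  refine card_nbij' (fun c => c.erase x) (fun d => insert x d) ?_ ?_ ?_ ?_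
  · simp only [Set.MapsTo, coe_filter, mem_univ, true_and, Set.mem_ofPred_eq]
    rintro c ⟨hc, hxc, himg⟩
    have hrank : ∀ y ∈ c, ρ y ∈ insert (ρ x) U := fun y hy => himg ▸ mem_image_of_mem ρ hy
    have hxi : ρ x ∉ (c.erase x).image ρ := by
      simp only [mem_image, mem_erase, not_exists, not_and, and_imp]
      exact fun y hyx hy h => hyx (hc.eq_of_rank_eq hρ hy hxc h)
    refine ⟨hc.mono (by simp), fun y hy => hc.le_of_rank_le hρ hxc (mem_of_mem_erase hy) ?_, ?_⟩
    · rcases mem_insert.1 (hrank y (mem_of_mem_erase hy)) with h | h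
      · exact h.le
      · exact (hU _ h).le
    · rw [← erase_insert hxi, ← image_insert, insert_erase hxc, himg, erase_insert hxU]
  · simp only [Set.MapsTo, coe_filter, mem_univ, true_and, Set.mem_ofPred_eq]
    rintro d ⟨hd, hle, himg⟩
    refine ⟨?_, mem_insert_self x d, by rw [image_insert, himg]⟩
    rw [coe_insert]
    exact hd.insert fun y hy _ => Or.inr (hle y hy)
  · simp only [Set.LeftInvOn, coe_filter, mem_univ, true_and, Set.mem_ofPred_eq]
    rintro c ⟨-, hxc, -⟩
    exact insert_erase hxc
  · simp only [Set.LeftInvOn, coe_filter, mem_univ, true_and, Set.mem_ofPred_eq]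
    rintro d ⟨-, -, himg⟩
    exact erase_insert fun hxd => hxU (himg ▸ mem_image_of_mem ρ hxd)

theorem card_chains_eq_sum_card_chains_through (hρ : StrictMono ρ) {n : ℕ} {S : Finset ℕ}
    (hn : n ∈ S) :
    #{c : Finset P | IsChain (· ≤ ·) (c : Set P) ∧ c.image ρ = S} =
      ∑ x with ρ x = n,
        #{c : Finset P | IsChain (· ≤ ·) (c : Set P) ∧ x ∈ c ∧ c.image ρ = S} := by
  rw [← card_biUnion]
  · congr 1
    ext c
    simp only [mem_filter, mem_univ, true_and, mem_biUnion]
    constructor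
    · rintro ⟨hc, himg⟩
      obtain ⟨x, hxc, hx⟩ := mem_image.1 (himg ▸ hn)
      exact ⟨x, hx, hc, hxc, himg⟩
    · rintro ⟨x, -, hc, -, himg⟩
      exact ⟨hc, himg⟩
  · intro x hx y hy hxy
    simp only [coe_filter, mem_univ, true_and, Set.mem_ofPred_eq] at hx hy
    refine disjoint_left.2 fun c hcx hcy => hxy ?_
    simp only [mem_filter, mem_univ, true_and] at hcx hcy
    exact hcx.1.eq_of_rank_eq hρ hcx.2.1 hcy.2.1 (hx.trans hy.symm)

theorem flagF_insert_eq_sum (hρ : StrictMono ρ) {n : ℕ} {U : Finset ℕ} (hU : ∀ j ∈ U, j < n) :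
    flagF P ρ (insert n U) = ∑ x with ρ x = n, flagF {y // y ≤ x} (fun y => ρ y.1) U := by
  rw [flagF_eq_card, card_chains_eq_sum_card_chains_through hρ (mem_insert_self n U),
    Nat.cast_sum]
  refine sum_congr rfl fun x hx => ?_
  obtain rfl : ρ x = n := (mem_filter.1 hx).2
  rw [flagF_subtype, card_chains_through_eq_card_chains_below hρ x hU]

theorem flagH_add_flagH_insert_eq_sum (hρ : StrictMono ρ) {n : ℕ} {T : Finset ℕ}
    (hT : ∀ j ∈ T, j < n) :
    flagH P ρ T + flagH P ρ (insert n T) =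
      ∑ x with ρ x = n, flagH {y // y ≤ x} (fun y => ρ y.1) T := by
  rw [flagH_add_flagH_insert P ρ fun h => (hT n h).false]
  calc ∑ U ∈ T.powerset, (-1) ^ (#T - #U) * flagF P ρ (insert n U)
      = ∑ U ∈ T.powerset, ∑ x with ρ x = n,
          (-1) ^ (#T - #U) * flagF {y // y ≤ x} (fun y => ρ y.1) U := by
        refine sum_congr rfl fun U hU => ?_
        rw [flagF_insert_eq_sum hρ fun j hj => hT j (mem_powerset.1 hU hj), mul_sum]
    _ = ∑ x with ρ x = n, flagH {y // y ≤ x} (fun y => ρ y.1) T := sum_comm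

end Chains

theorem Hprime_Psi_general (n : ℕ) (P : Type*) [Fintype P] [PartialOrder P]
    [BoundedOrder P] (ρ : P → ℕ)
    (htop : ρ ⊤ = n + 1) (hn : 1 ≤ n)
    (hstrict : ∀ x y : P, x < y → ρ x < ρ y)
    (hcov : ∀ x y : P, x ⋖ y → ρ y = ρ x + 1) :
    extendMon HMon (Psi P ρ n) =
      ∑ x ∈ Finset.univ.filter (fun x : P => x ⋖ ⊤),
        Psi {y : P // y ≤ x} (fun y => ρ y.1) (n - 1) := by
  obtain ⟨m, rfl⟩ : ∃ m, n = m + 1 := ⟨n - 1, by omega⟩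
  have hρ : StrictMono ρ := fun x y => hstrict x y
  have hcoatoms : univ.filter (· ⋖ ⊤) = univ.filter (ρ · = m + 1) :=
    filter_congr fun x _ => covBy_top_iff_rank_eq hρ hcov htop x
  rw [Nat.add_sub_cancel, extendMon_HMon_Psi_succ, hcoatoms]
  simp only [Psi]
  rw [sum_comm]
  refine sum_congr rfl fun T hT => ?_
  have hT' : ∀ j ∈ T, j < m + 1 := fun j hj => (mem_Icc.1 (mem_powerset.1 hT hj)).2.trans_lt
    (Nat.lt_succ_self m)
  rw [flagH_add_flagH_insert_eq_sum hρ hT']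
  exact map_sum (MonoidAlgebra.singleAddHom (word m T)) _ _

/-- For a graded poset `P` of rank at least 2,
`H'(Ψ(P)) = ∑_{x coatom of P} Ψ([0̂,x])`. -/
theorem Hprime_Psi (n : ℕ) (P : Type*) [Fintype P] [PartialOrder P]
    [BoundedOrder P] (ρ : P → ℕ)
    (hbot : ρ ⊥ = 0) (htop : ρ ⊤ = n + 1) (hn : 1 ≤ n)
    (hstrict : ∀ x y : P, x < y → ρ x < ρ y)
    (hcov : ∀ x y : P, x ⋖ y → ρ y = ρ x + 1) :
    extendMon HMon (Psi P ρ n) =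
      ∑ x ∈ Finset.univ.filter (fun x : P => x ⋖ ⊤),
        Psi {y : P // y ≤ x} (fun y => ρ y.1) (n - 1) :=
  Hprime_Psi_general n P ρ htop hn hstrict hcov
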